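/- arXiv:1505.00546 — 2 statements merged into one kernel-verified Lean document; each statement's English description precedes it below -/
import Mathlib

section
/- Finite measures yield Möbius harmonic functions: if ν is a finite measure on (BM, F) and P is a Bernoulli measure with f(u) = P(↑u), then λ(u) = ν(↑u)/f(u) satisfies the Möbius harmonicity equation Σ_{c clique} (-1)^{|c|} f(c) λ(u·c) = 0 for all u ∈ M; equivalently, Σ_{c clique} (-1)^{|c|} ν(↑(u·c)) = 0 for all u ∈ M. -/
open scoped Classical

variable {α : Type*}

/-- A clique of the independence graph. -/
def IsCliq (I : α → α → Prop) (c : Finset α) : Prop :=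
  ∀ a ∈ c, ∀ b ∈ c, a ≠ b → I a b

/-- Cartier–Foata admissibility `c → c'`. -/
def CFadm (I : α → α → Prop) (c c' : Finset α) : Prop :=
  ∀ b ∈ c', ∃ a ∈ c, ¬ I a b

/-- Parallelism of cliques: `c ∥ c'`. -/
def Par (I : α → α → Prop) (c c' : Finset α) : Prop :=
  ∀ a ∈ c, ∀ b ∈ c', I a b

/-- The commutation relation generating the trace monoid congruence. -/
def traceRel (I : α → α → Prop) : FreeMonoid α → FreeMonoid α → Prop :=
  fun x y => ∃ a b, I a b ∧ x = FreeMonoid.of a * FreeMonoid.of b ∧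
    y = FreeMonoid.of b * FreeMonoid.of a

/-- The trace monoid `M(Σ, I)`. -/
abbrev TM (I : α → α → Prop) := Con.Quotient (conGen (traceRel I))

/-- Canonical projection from the free monoid. -/
def mkTM (I : α → α → Prop) : FreeMonoid α →* TM I := Con.mk' _

/-- The image of a letter in the trace monoid. -/
def emb (I : α → α → Prop) (a : α) : TM I := mkTM I (FreeMonoid.of a)

/-- The trace associated to a clique. -/
noncomputable def ctr (I : α → α → Prop) (c : Finset α) : TM I :=
  mkTM I ((c.toList.map FreeMonoid.of).prod)

/-- The prefix (left divisibility) order on traces. -/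
def pref (I : α → α → Prop) (u v : TM I) : Prop := ∃ w, v = u * w

theorem pref_trans (I : α → α → Prop) {u v w : TM I} (h1 : pref I u v)
    (h2 : pref I v w) : pref I u w := by
  obtain ⟨a, rfl⟩ := h1; obtain ⟨b, rfl⟩ := h2; exact ⟨a * b, mul_assoc _ _ _⟩

/-- Nondecreasing sequences of traces. -/
def HSeq (I : α → α → Prop) := {x : ℕ → TM I // ∀ n, pref I (x n) (x (n + 1))}

/-- The domination preorder on nondecreasing sequences. -/
def preceq (I : α → α → Prop) (x y : HSeq I) : Prop := ∀ n, ∃ m, pref I (x.1 n) (y.1 m)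

instance hseqSetoid (I : α → α → Prop) : Setoid (HSeq I) where
  r x y := preceq I x y ∧ preceq I y x
  iseqv := by
    constructor
    · intro x; constructor <;> exact fun n => ⟨n, 1, (mul_one _).symm⟩
    · rintro x y ⟨h1, h2⟩; exact ⟨h2, h1⟩
    · rintro x y z ⟨h1, h2⟩ ⟨h3, h4⟩
      constructor
      · intro n; obtain ⟨m, hm⟩ := h1 n; obtain ⟨k, hk⟩ := h3 m
        exact ⟨k, pref_trans I hm hk⟩
      · intro n; obtain ⟨m, hm⟩ := h4 n; obtain ⟨k, hk⟩ := h2 m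
        exact ⟨k, pref_trans I hm hk⟩

/-- Generalized traces: the collapse of the preordered set of nondecreasing sequences. -/
def GT (I : α → α → Prop) := Quotient (hseqSetoid I)

/-- A finite trace, seen as a generalized trace. -/
def toGT (I : α → α → Prop) (u : TM I) : GT I :=
  Quotient.mk (hseqSetoid I) ⟨fun _ => u, fun _ => ⟨1, (mul_one u).symm⟩⟩

/-- `u` is a prefix of the generalized trace `ξ`. -/
def leT (I : α → α → Prop) (u : TM I) (ξ : GT I) : Prop :=
  Quotient.liftOn ξ (fun x => ∃ m, pref I u (x.1 m)) (by
    rintro x y ⟨hxy, hyx⟩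
    apply propext
    constructor
    · rintro ⟨m, hm⟩; obtain ⟨k, hk⟩ := hxy m; exact ⟨k, pref_trans I hm hk⟩
    · rintro ⟨m, hm⟩; obtain ⟨k, hk⟩ := hyx m; exact ⟨k, pref_trans I hm hk⟩)

/-- The boundary at infinity: generalized traces that are not finite traces. -/
def Bdry (I : α → α → Prop) := {ξ : GT I // ∀ u : TM I, ξ ≠ toGT I u}

/-- The elementary cylinder of base `u`. -/
def cylSet (I : α → α → Prop) (u : TM I) : Set (Bdry I) := {ξ | leT I u ξ.1}

/-- The σ-algebra generated by elementary cylinders. -/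
instance bdryMeasurableSpace (I : α → α → Prop) : MeasurableSpace (Bdry I) :=
  MeasurableSpace.generateFrom {s | ∃ u : TM I, s = cylSet I u}

open MeasureTheory

/-!
Traces are left cancellative: a word representing `a · w` contains an occurrence of `a`
commuting with every letter before it, and deleting the first such occurrence yields a word for
`w`; this extraction is compatible with each elementary commutation, hence with the congruence.

For a boundary point `ξ ∈ ↑u`, the letters `a` with `ξ ∈ ↑(u·a)` form a nonempty clique `S`
(`u·a` and `u·b` divide a common trace, which forces `a` and `b` to commute), and for a clique `c`,
`ξ ∈ ↑(u·c)` iff `c ⊆ S`. Hence `∑_c (-1)^|c| 1_{↑(u·c)}(ξ) = ∑_{c ⊆ S} (-1)^|c| = 0` pointwise;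
integrating against `ν` gives the identity for `ν`, and dividing by `P(↑u)`, using
`P(↑(u·c)) = P(↑u) P(↑c)`, gives the harmonicity of `λ`.
-/

open Filter Relation

namespace TM

variable {I : α → α → Prop}

def ofList (I : α → α → Prop) (l : List α) : TM I := mkTM I (FreeMonoid.ofList l)

theorem ofList_append (l m : List α) : ofList I (l ++ m) = ofList I l * ofList I m := by
  rw [ofList, FreeMonoid.ofList_append, map_mul]; rfl

theorem ofList_nil : ofList I ([] : List α) = 1 := map_one _

theorem ofList_cons (a : α) (l : List α) : ofList I (a :: l) = emb I a * ofList I l :=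
  ofList_append [a] l

theorem ofList_eq_prod (l : List α) : ofList I l = (l.map (emb I)).prod := by
  induction l with
  | nil => exact ofList_nil
  | cons a l ih => rw [ofList_cons, ih, List.map_cons, List.prod_cons]

theorem exists_ofList_eq (w : TM I) : ∃ l, ofList I l = w := by
  obtain ⟨x, rfl⟩ := Con.mk'_surjective w
  exact ⟨x.toList, rfl⟩

theorem ofList_eq_ofList_iff {l m : List α} :
    ofList I l = ofList I m ↔ conGen (traceRel I) (FreeMonoid.ofList l) (FreeMonoid.ofList m) :=
  Con.eq _

theorem commute_emb {a b : α} (h : SymmGen I a b) : Commute (emb I a) (emb I b) := by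
  have key : ∀ {a b : α}, I a b → Commute (emb I a) (emb I b) := fun hab =>
    (Con.eq _).mpr <| ConGen.Rel.of _ _ ⟨_, _, hab, rfl, rfl⟩
  exact h.elim key fun hba => (key hba).symm

theorem commute_emb_ofList {a : α} {l : List α} (h : ∀ b ∈ l, SymmGen I a b) :
    Commute (emb I a) (ofList I l) := by
  rw [ofList_eq_prod]
  exact Commute.list_prod_right _ _ fun _ hb => by
    obtain ⟨b, hb', rfl⟩ := List.mem_map.mp hb
    exact commute_emb (h b hb')

def letters : TM I →* Multiplicative (Multiset α) :=
  (conGen (traceRel I)).lift (FreeMonoid.lift fun a => Multiplicative.ofAdd {a}) <|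
    Con.conGen_le.mpr <| by
      rintro _ _ ⟨a, b, -, rfl, rfl⟩
      simp only [Con.ker_rel, map_mul, FreeMonoid.lift_eval_of, ← ofAdd_add, add_comm]

theorem letters_ofList (l : List α) :
    letters (ofList I l) = Multiplicative.ofAdd (l : Multiset α) := by
  induction l with
  | nil => rw [ofList_nil, map_one]; rfl
  | cons a l ih =>
    rw [ofList_cons, map_mul, ih, ← Multiset.cons_coe, ← Multiset.singleton_add, ofAdd_add]
    rfl

theorem mem_iff_of_ofList_eq {l m : List α} (h : ofList I l = ofList I m) (b : α) :
    b ∈ l ↔ b ∈ m := by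
  have := congrArg letters h
  rw [letters_ofList, letters_ofList] at this
  simpa using congrArg (b ∈ ·) (Multiplicative.ofAdd.injective this)

def Extract (I : α → α → Prop) (a : α) (l l' : List α) : Prop :=
  ∃ l₁ l₂, l = l₁ ++ a :: l₂ ∧ a ∉ l₁ ∧ (∀ b ∈ l₁, SymmGen I a b) ∧ l' = l₁ ++ l₂

theorem Extract.unique {a : α} {l l' l'' : List α} (h₁ : Extract I a l l')
    (h₂ : Extract I a l l'') : l' = l'' := by
  obtain ⟨l₁, l₂, rfl, ha₁, -, rfl⟩ := h₁
  obtain ⟨m₁, m₂, h, ha₂, -, rfl⟩ := h₂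
  rcases List.append_eq_append_iff.mp h with ⟨_ | ⟨b, t⟩, rfl, ht⟩ | ⟨_ | ⟨b, t⟩, rfl, ht⟩
  · simp_all
  · simp only [List.cons_append, List.cons.injEq] at ht
    simp [← ht.1] at ha₂
  · simp_all
  · simp only [List.cons_append, List.cons.injEq] at ht
    simp [← ht.1] at ha₁

theorem Extract.ofList_eq {a : α} {l l' : List α} (h : Extract I a l l') :
    ofList I l = emb I a * ofList I l' := by
  obtain ⟨l₁, l₂, rfl, -, hc, rfl⟩ := h
  rw [ofList_append, ofList_cons, ofList_append, (commute_emb_ofList hc).symm.left_comm]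

theorem extract_append_iff {a : α} {l k m : List α} :
    Extract I a (l ++ k) m ↔ (∃ l', Extract I a l l' ∧ m = l' ++ k) ∨
      (a ∉ l ∧ (∀ b ∈ l, SymmGen I a b) ∧ ∃ k', Extract I a k k' ∧ m = l ++ k') := by
  constructor
  · rintro ⟨l₁, l₂, h, ha, hc, rfl⟩
    rcases List.append_eq_append_iff.mp h with ⟨t, rfl, rfl⟩ | ⟨_ | ⟨b, t⟩, rfl, ht⟩
    · simp only [List.mem_append, not_or] at ha
      exact .inr ⟨ha.1, fun b hb => hc b (List.mem_append_left _ hb), t ++ l₂,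
        ⟨t, l₂, rfl, ha.2, fun b hb => hc b (List.mem_append_right _ hb), rfl⟩, by simp⟩
    · simp only [List.nil_append] at ht
      exact .inr ⟨by simpa using ha, by simpa using hc, l₂,
        ⟨[], l₂, ht.symm, by simp, by simp, rfl⟩, by simp⟩
    · simp only [List.cons_append, List.cons.injEq] at ht
      obtain ⟨rfl, rfl⟩ := ht
      exact .inl ⟨l₁ ++ t, ⟨l₁, t, rfl, ha, hc, rfl⟩, by simp⟩
  · rintro (⟨l', ⟨l₁, l₂, rfl, ha, hc, rfl⟩, rfl⟩ | ⟨ha, hc, k', ⟨k₁, k₂, rfl, hk, hc', rfl⟩, rfl⟩)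
    · exact ⟨l₁, l₂ ++ k, by simp, ha, hc, by simp⟩
    · refine ⟨l ++ k₁, k₂, by simp, by simp [ha, hk], fun b hb => ?_, by simp⟩
      exact (List.mem_append.mp hb).elim (hc b) (hc' b)

def ExtractTransfers (I : α → α → Prop) (l m : List α) : Prop :=
  ∀ a l', Extract I a l l' → ∃ m', Extract I a m m' ∧ ofList I l' = ofList I m'

theorem ExtractTransfers.refl (l : List α) : ExtractTransfers I l l :=
  fun _ l' h => ⟨l', h, rfl⟩

theorem ExtractTransfers.trans {l m n : List α} (h₁ : ExtractTransfers I l m)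
    (h₂ : ExtractTransfers I m n) : ExtractTransfers I l n := fun a l' h => by
  obtain ⟨m', hm', e₁⟩ := h₁ a l' h
  obtain ⟨n', hn', e₂⟩ := h₂ a m' hm'
  exact ⟨n', hn', e₁.trans e₂⟩

theorem extractTransfers_swap {p q : α} (h : SymmGen I p q) :
    ExtractTransfers I [p, q] [q, p] := by
  rintro a l' ⟨_ | ⟨b, _ | ⟨c, t⟩⟩, l₂, hl, ha, -, rfl⟩
  · simp only [List.nil_append, List.cons.injEq] at hl
    obtain ⟨rfl, rfl⟩ := hl
    by_cases hpq : p = q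
    · subst hpq; exact ⟨[p], ⟨[], [p], rfl, by simp, by simp, rfl⟩, rfl⟩
    · exact ⟨[q], ⟨[q], [], rfl, by simp [hpq], by simpa using h, rfl⟩, rfl⟩
  · simp only [List.cons_append, List.nil_append, List.cons.injEq] at hl
    obtain ⟨rfl, rfl, rfl⟩ := hl
    exact ⟨[p], ⟨[], [p], rfl, by simp, by simp, rfl⟩, rfl⟩
  · simp at hl

theorem ExtractTransfers.append {l m k n : List α} (hlm : ofList I l = ofList I m)
    (hkn : ofList I k = ofList I n) (hl : ExtractTransfers I l m)
    (hk : ExtractTransfers I k n) : ExtractTransfers I (l ++ k) (m ++ n) := by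
  intro a l' h
  rcases extract_append_iff.mp h with ⟨l'', hl'', rfl⟩ | ⟨ha, hc, k', hk', rfl⟩
  · obtain ⟨m', hm', e⟩ := hl a l'' hl''
    exact ⟨m' ++ n, extract_append_iff.mpr (.inl ⟨m', hm', rfl⟩), by
      rw [ofList_append, ofList_append, e, hkn]⟩
  · obtain ⟨n', hn', e⟩ := hk a k' hk'
    have hmem := mem_iff_of_ofList_eq hlm
    refine ⟨m ++ n', extract_append_iff.mpr (.inr ⟨fun h => ha ((hmem a).mpr h),
      fun b hb => hc b ((hmem b).mpr hb), n', hn', rfl⟩), ?_⟩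
    rw [ofList_append, ofList_append, e, hlm]

theorem extractTransfers_of_ofList_eq {l m : List α} (h : ofList I l = ofList I m) :
    ExtractTransfers I l m := by
  suffices key : ∀ x y, ConGen.Rel (traceRel I) x y →
      ExtractTransfers I x.toList y.toList ∧ ExtractTransfers I y.toList x.toList from
    (key _ _ (ofList_eq_ofList_iff.mp h)).1
  intro x y hxy
  induction hxy with
  | of x y hxy =>
    obtain ⟨p, q, hpq, rfl, rfl⟩ := hxy
    exact ⟨extractTransfers_swap (.inl hpq), extractTransfers_swap (.inr hpq)⟩
  | refl x => exact ⟨.refl _, .refl _⟩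
  | symm _ ih => exact ih.symm
  | trans _ _ ih₁ ih₂ => exact ⟨ih₁.1.trans ih₂.1, ih₂.2.trans ih₁.2⟩
  | mul h₁ h₂ ih₁ ih₂ =>
    have e₁ : ofList I _ = ofList I _ := (Con.eq _).mpr h₁
    have e₂ : ofList I _ = ofList I _ := (Con.eq _).mpr h₂
    exact ⟨ih₁.1.append e₁ e₂ ih₂.1, ih₁.2.append e₁.symm e₂.symm ih₂.2⟩

theorem exists_extract_of_ofList_eq_emb_mul {a : α} {l : List α} {w : TM I}
    (h : ofList I l = emb I a * w) : ∃ l', Extract I a l l' ∧ ofList I l' = w := by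
  obtain ⟨m, rfl⟩ := exists_ofList_eq w
  rw [← ofList_cons] at h
  obtain ⟨l', hl', e⟩ :=
    extractTransfers_of_ofList_eq h.symm a m ⟨[], m, rfl, by simp, by simp, rfl⟩
  exact ⟨l', hl', e.symm⟩

theorem emb_mul_left_cancel {a : α} {u v : TM I} (h : emb I a * u = emb I a * v) : u = v := by
  obtain ⟨l, rfl⟩ := exists_ofList_eq u
  rw [← ofList_cons] at h
  obtain ⟨l', hl', rfl⟩ := exists_extract_of_ofList_eq_emb_mul h
  rw [hl'.unique ⟨[], l, rfl, by simp, by simp, rfl⟩]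
  rfl

instance : IsLeftCancelMul (TM I) where
  mul_left_cancel u := by
    obtain ⟨l, rfl⟩ := exists_ofList_eq u
    induction l with
    | nil => rw [ofList_nil]; exact isRegular_one.left
    | cons a l ih =>
      intro v w h
      simp only [ofList_cons, mul_assoc] at h
      exact ih (emb_mul_left_cancel h)

theorem Extract.exists_extract_of_ne {a b : α} {l l' l'' : List α} (ha : Extract I a l l')
    (hb : Extract I b l l'') (hab : a ≠ b) : SymmGen I a b ∧ ∃ k, Extract I b l' k := by
  obtain ⟨l₁, l₂, rfl, -, hc₁, rfl⟩ := ha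
  obtain ⟨m₁, m₂, h, hb₁, hc₂, -⟩ := hb
  rcases List.append_eq_append_iff.mp h with ⟨_ | ⟨c, t⟩, rfl, ht⟩ | ⟨_ | ⟨c, t⟩, rfl, ht⟩
  · simp_all
  · simp only [List.cons_append, List.cons.injEq] at ht
    obtain ⟨rfl, rfl⟩ := ht
    simp only [List.mem_append, List.mem_cons, not_or] at hb₁ hc₂
    refine ⟨(hc₂ a (.inr (.inl rfl))).symm, l₁ ++ t ++ m₂, l₁ ++ t, m₂, by simp, ?_, ?_, rfl⟩
    · simp [hb₁.1, hb₁.2.2]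
    · simp only [List.mem_append]
      exact fun d hd => hd.elim (fun hd => hc₂ d (.inl hd)) fun hd => hc₂ d (.inr (.inr hd))
  · simp_all
  · simp only [List.cons_append, List.cons.injEq] at ht
    obtain ⟨rfl, rfl⟩ := ht
    exact ⟨hc₁ b (by simp), m₁ ++ t ++ l₂, m₁, t ++ l₂, by simp, hb₁, hc₂, by simp⟩

theorem symmGen_and_emb_dvd_of_emb_mul_eq {a b : α} {s t : TM I}
    (h : emb I a * s = emb I b * t) (hab : a ≠ b) : SymmGen I a b ∧ emb I b ∣ s := by
  obtain ⟨l, hl⟩ := exists_ofList_eq (emb I a * s)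
  obtain ⟨la, hla, rfl⟩ := exists_extract_of_ofList_eq_emb_mul hl
  obtain ⟨lb, hlb, -⟩ := exists_extract_of_ofList_eq_emb_mul (hl.trans h)
  obtain ⟨hsymm, k, hk⟩ := hla.exists_extract_of_ne hlb hab
  exact ⟨hsymm, ofList I k, hk.ofList_eq⟩

theorem ctr_eq_prod (c : Finset α) : ctr I c = (c.toList.map (emb I)).prod := by
  rw [ctr, map_list_prod, List.map_map]; rfl

theorem ctr_insert {a : α} {c : Finset α} (hc : IsCliq I (insert a c)) (ha : a ∉ c) :
    ctr I (insert a c) = emb I a * ctr I c := by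
  have hcomm : (insert a c).toList.Pairwise fun x y => Commute (emb I x) (emb I y) :=
    (Finset.nodup_toList _).pairwise_of_forall_ne fun x hx y hy hxy =>
      commute_emb (.inl (hc x (Finset.mem_toList.mp hx) y (Finset.mem_toList.mp hy) hxy))
  rw [ctr_eq_prod, ctr_eq_prod, ← List.prod_cons, ← List.map_cons]
  exact ((Finset.toList_insert ha).map _).prod_eq' (List.pairwise_map.mpr hcomm)

theorem emb_dvd_ctr {a : α} {c : Finset α} (hc : IsCliq I c) (ha : a ∈ c) :
    emb I a ∣ ctr I c := by
  rw [← Finset.insert_erase ha] at hc ⊢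
  exact ⟨_, ctr_insert hc (Finset.notMem_erase a c)⟩

theorem ctr_dvd_of_forall_emb_dvd {c : Finset α} (hc : IsCliq I c) {w : TM I}
    (h : ∀ a ∈ c, emb I a ∣ w) : ctr I c ∣ w := by
  induction c using Finset.induction_on generalizing w with
  | empty => exact ⟨w, by rw [ctr_eq_prod]; simp⟩
  | insert a c ha ih =>
    obtain ⟨w, rfl⟩ := h a (Finset.mem_insert_self a c)
    have hw : ∀ b ∈ c, emb I b ∣ w := fun b hb => by
      obtain ⟨t, ht⟩ := h b (Finset.mem_insert_of_mem hb)
      exact (symmGen_and_emb_dvd_of_emb_mul_eq ht fun hab => ha (hab ▸ hb)).2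
    rw [ctr_insert hc ha]
    exact mul_dvd_mul_left _ <| ih (fun x hx y hy => hc x (Finset.mem_insert_of_mem hx) y
      (Finset.mem_insert_of_mem hy)) hw

end TM

section Boundary

open TM

variable {I : α → α → Prop}

theorem HSeq.dvd_of_le (x : HSeq I) {m n : ℕ} (h : m ≤ n) : x.1 m ∣ x.1 n := by
  induction n, h using Nat.le_induction with
  | base => exact dvd_rfl
  | succ n _ ih => exact ih.trans (x.2 n)

theorem leT_mk_iff_eventually (u : TM I) (x : HSeq I) :
    leT I u (Quotient.mk _ x) ↔ ∀ᶠ n in atTop, u ∣ x.1 n :=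
  ⟨fun ⟨m, hm⟩ => eventually_atTop.mpr ⟨m, fun _ hn => dvd_trans hm (x.dvd_of_le hn)⟩,
    fun h => h.exists⟩

theorem leT_of_dvd {u v : TM I} {ξ : GT I} (h : u ∣ v) (hv : leT I v ξ) : leT I u ξ := by
  induction ξ using Quotient.inductionOn with | h x => ?_
  rw [leT_mk_iff_eventually] at hv ⊢
  exact hv.mono fun _ hn => h.trans hn

theorem symmGen_of_leT_mul_emb {u : TM I} {ξ : GT I} {a b : α} (ha : leT I (u * emb I a) ξ)
    (hb : leT I (u * emb I b) ξ) (hab : a ≠ b) : SymmGen I a b := by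
  induction ξ using Quotient.inductionOn with | h x => ?_
  rw [leT_mk_iff_eventually] at ha hb
  obtain ⟨n, ⟨s, hs⟩, ⟨t, ht⟩⟩ := (ha.and hb).exists
  rw [hs, mul_assoc, mul_assoc] at ht
  exact (symmGen_and_emb_dvd_of_emb_mul_eq (mul_left_cancel ht) hab).1

theorem leT_mul_ctr {u : TM I} {ξ : GT I} {c : Finset α} (hc : IsCliq I c) (hu : leT I u ξ)
    (h : ∀ a ∈ c, leT I (u * emb I a) ξ) : leT I (u * ctr I c) ξ := by
  induction ξ using Quotient.inductionOn with | h x => ?_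
  simp only [leT_mk_iff_eventually] at hu h ⊢
  filter_upwards [hu, (eventually_all_finset c).mpr h] with n ⟨w, hw⟩ hn
  rw [hw]
  refine mul_dvd_mul_left u (ctr_dvd_of_forall_emb_dvd hc fun a ha => ?_)
  obtain ⟨s, hs⟩ := hn a ha
  exact ⟨s, mul_left_cancel (by rw [← hw, hs, mul_assoc] : u * w = u * (emb I a * s))⟩

theorem Bdry.exists_leT_mul_emb (ξ : Bdry I) {u : TM I} (hu : leT I u ξ.1) :
    ∃ a, leT I (u * emb I a) ξ.1 := by
  obtain ⟨ξ, hξ⟩ := ξ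
  obtain ⟨x, rfl⟩ := Quotient.exists_rep ξ
  -- otherwise `x` would be equivalent to the constant sequence `u`
  obtain ⟨n, hn⟩ : ∃ n, ¬ x.1 n ∣ u := by
    by_contra! h
    exact hξ u (Quotient.sound ⟨fun n => ⟨0, h n⟩, fun _ => hu⟩)
  rw [leT_mk_iff_eventually] at hu
  obtain ⟨N, hnN, w, hw⟩ := ((eventually_ge_atTop n).and hu).exists
  obtain ⟨_ | ⟨a, l⟩, rfl⟩ := exists_ofList_eq w
  · rw [ofList_nil, mul_one] at hw
    exact absurd (hw ▸ x.dvd_of_le hnN) hn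
  · exact ⟨a, N, ofList I l, by rw [hw, ofList_cons, mul_assoc]⟩

end Boundary

section Cylinders

open TM Finset

variable {I : α → α → Prop}

theorem measurableSet_cylSet (u : TM I) : MeasurableSet (cylSet I u) :=
  MeasurableSpace.measurableSet_generateFrom ⟨u, rfl⟩

variable [Fintype α]

noncomputable def nextLetters (ξ : Bdry I) (u : TM I) : Finset α :=
  {a | ξ ∈ cylSet I (u * emb I a)}

theorem nextLetters_nonempty {ξ : Bdry I} {u : TM I} (hξ : ξ ∈ cylSet I u) :
    (nextLetters ξ u).Nonempty := by
  obtain ⟨a, ha⟩ := ξ.exists_leT_mul_emb hξ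
  exact ⟨a, mem_filter.mpr ⟨mem_univ a, ha⟩⟩

theorem filter_isCliq_mem_cylSet_eq_powerset (hsymm : ∀ a b, I a b → I b a) {ξ : Bdry I}
    {u : TM I} (hξ : ξ ∈ cylSet I u) :
    ({c | IsCliq I c ∧ ξ ∈ cylSet I (u * ctr I c)} : Finset (Finset α)) =
      (nextLetters ξ u).powerset := by
  ext c
  simp only [nextLetters, mem_filter, mem_univ, true_and, mem_powerset, subset_iff]
  constructor
  · rintro ⟨hc, h⟩ a ha
    exact leT_of_dvd (mul_dvd_mul_left u (emb_dvd_ctr hc ha)) h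
  · intro h
    have hc : IsCliq I c := fun a ha b hb hab =>
      (symmGen_of_leT_mul_emb (h ha) (h hb) hab).elim id (hsymm b a)
    exact ⟨hc, leT_mul_ctr hc hξ fun a ha => h ha⟩

theorem filter_isCliq_mem_cylSet_eq_empty {ξ : Bdry I} {u : TM I} (hξ : ξ ∉ cylSet I u) :
    ({c | IsCliq I c ∧ ξ ∈ cylSet I (u * ctr I c)} : Finset (Finset α)) = ∅ :=
  filter_false_of_mem fun c _ h => hξ (leT_of_dvd (dvd_mul_right u (ctr I c)) h.2)

theorem sum_isCliq_indicator_cylSet_eq_zero (hsymm : ∀ a b, I a b → I b a) (u : TM I)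
    (ξ : Bdry I) :
    ∑ c with IsCliq I c, (-1 : ℝ) ^ c.card * (cylSet I (u * ctr I c)).indicator 1 ξ = 0 := by
  simp only [Set.indicator_apply, Pi.one_apply, mul_ite, mul_one, mul_zero]
  rw [← sum_filter, filter_filter]
  by_cases hξ : ξ ∈ cylSet I u
  · rw [filter_isCliq_mem_cylSet_eq_powerset hsymm hξ]
    exact_mod_cast sum_powerset_neg_one_pow_card_of_nonempty (nextLetters_nonempty hξ)
  · rw [filter_isCliq_mem_cylSet_eq_empty hξ, sum_empty]

theorem sum_isCliq_measureReal_cylSet_eq_zero (hsymm : ∀ a b, I a b → I b a)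
    (ν : Measure (Bdry I)) [IsFiniteMeasure ν] (u : TM I) :
    ∑ c with IsCliq I c, (-1 : ℝ) ^ c.card * ν.real (cylSet I (u * ctr I c)) = 0 := by
  calc _ = ∫ ξ, ∑ c with IsCliq I c,
          (-1 : ℝ) ^ c.card * (cylSet I (u * ctr I c)).indicator 1 ξ ∂ν := by
        rw [integral_finsetSum _ fun c _ =>
          ((integrable_const 1).indicator (measurableSet_cylSet _)).const_mul _]
        simp only [integral_const_mul, integral_indicator_one (measurableSet_cylSet _)]
    _ = 0 := by simp only [sum_isCliq_indicator_cylSet_eq_zero hsymm, integral_zero]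

end Cylinders

theorem finite_measure_harmonic_general {α : Type*} [Fintype α] (I : α → α → Prop)
    (hsymm : ∀ a b, I a b → I b a)
    (P : Measure (Bdry I)) [IsProbabilityMeasure P]
    (hpos : ∀ u : TM I, 0 < P (cylSet I u))
    (hmult : ∀ u v : TM I, P (cylSet I (u * v)) = P (cylSet I u) * P (cylSet I v))
    (ν : Measure (Bdry I)) [IsFiniteMeasure ν]
    (lam : TM I → ℝ)
    (hlam : ∀ u : TM I, lam u = (ν (cylSet I u)).toReal / (P (cylSet I u)).toReal) :
    (∀ u : TM I,
      (∑ c : Finset α,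
        if IsCliq I c then
          (-1 : ℝ) ^ c.card * (P (cylSet I (ctr I c))).toReal * lam (u * ctr I c)
        else 0) = 0) ∧
    (∀ u : TM I,
      (∑ c : Finset α,
        if IsCliq I c then (-1 : ℝ) ^ c.card * (ν (cylSet I (u * ctr I c))).toReal
        else 0) = 0) := by
  have hν (u : TM I) : (∑ c : Finset α,
      if IsCliq I c then (-1 : ℝ) ^ c.card * (ν (cylSet I (u * ctr I c))).toReal else 0) = 0 := by
    rw [← Finset.sum_filter]
    exact sum_isCliq_measureReal_cylSet_eq_zero hsymm ν u
  have hP (v : TM I) : (P (cylSet I v)).toReal ≠ 0 :=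
    ENNReal.toReal_ne_zero.mpr ⟨(hpos v).ne', measure_ne_top P _⟩
  refine ⟨fun u => ?_, hν⟩
  calc _ = ∑ c : Finset α, ((P (cylSet I u)).toReal)⁻¹ *
        if IsCliq I c then (-1 : ℝ) ^ c.card * (ν (cylSet I (u * ctr I c))).toReal else 0 := by
        refine Finset.sum_congr rfl fun c _ => ?_
        split_ifs
        · rw [hlam, hmult, ENNReal.toReal_mul]
          field_simp [hP u, hP (ctr I c)]
        · rw [mul_zero]
    _ = 0 := by rw [← Finset.mul_sum, hν u, mul_zero]

/-- Finite measures on the boundary yield Möbius harmonic functions: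
`λ(u) = ν(↑u)/P(↑u)` is Möbius harmonic; equivalently
`∑_c (-1)^{|c|} ν(↑(u·c)) = 0` for all `u`. -/
theorem finite_measure_harmonic {α : Type*} [Fintype α] (I : α → α → Prop)
    (hsymm : ∀ a b, I a b → I b a) (hirr : ∀ a, ¬ I a a)
    (P : Measure (Bdry I)) [IsProbabilityMeasure P]
    (hpos : ∀ u : TM I, 0 < P (cylSet I u))
    (hmult : ∀ u v : TM I, P (cylSet I (u * v)) = P (cylSet I u) * P (cylSet I v))
    (ν : Measure (Bdry I)) [IsFiniteMeasure ν]
    (lam : TM I → ℝ)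
    (hlam : ∀ u : TM I, lam u = (ν (cylSet I u)).toReal / (P (cylSet I u)).toReal) :
    (∀ u : TM I,
      (∑ c : Finset α,
        if IsCliq I c then
          (-1 : ℝ) ^ c.card * (P (cylSet I (ctr I c))).toReal * lam (u * ctr I c)
        else 0) = 0) ∧
    (∀ u : TM I,
      (∑ c : Finset α,
        if IsCliq I c then (-1 : ℝ) ^ c.card * (ν (cylSet I (u * ctr I c))).toReal
        else 0) = 0) :=
  finite_measure_harmonic_general I hsymm P hpos hmult ν lam hlam
end

section
/- Martin kernels at boundary points are Möbius harmonic: for ξ ∈ BM, define K_ξ(x) = (1/f(x))·1_{x ≤ ξ}. Then for every x ∈ M, Σ_{c clique} (-1)^{|c|} f(c) K_ξ(x·c) = 0. -/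
open scoped Classical

variable {α : Type*}

open MeasureTheory

lemma mk_eq {I : α → α → Prop} {w w' : FreeMonoid α} :
    mkTM I w = mkTM I w' ↔ ConGen.Rel (traceRel I) w w' := Con.eq _

lemma mk_surj {I : α → α → Prop} (t : TM I) : ∃ w, mkTM I w = t := Con.mk'_surjective t

lemma mk_cons {I : α → α → Prop} (x : α) (l : List α) :
    mkTM I (FreeMonoid.ofList (x :: l)) = mkTM I (FreeMonoid.of x) * mkTM I (FreeMonoid.ofList l) := by
  rw [← map_mul]; rfl

lemma mk_append {I : α → α → Prop} (l1 l2 : List α) :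
    mkTM I (FreeMonoid.ofList (l1 ++ l2)) = mkTM I (FreeMonoid.ofList l1) * mkTM I (FreeMonoid.ofList l2) := by
  rw [← map_mul]; rfl

lemma rel_count {I : α → α → Prop} {w w' : FreeMonoid α}
    (h : ConGen.Rel (traceRel I) w w') (a : α) : w.toList.count a = w'.toList.count a := by
  induction h with
  | of x y hxy =>
      obtain ⟨c, d, hI, rfl, rfl⟩ := hxy
      by_cases hc : c = a <;> by_cases hd : d = a <;>
        simp [List.count_cons, hc, hd]
  | refl => rfl
  | symm _ ih => exact (ih).symm
  | trans _ _ ih1 ih2 => exact ih1.trans ih2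
  | mul _ _ ih1 ih2 => simp [FreeMonoid.toList_mul, List.count_append, ih1, ih2]

lemma rel_mem {I : α → α → Prop} {w w' : FreeMonoid α}
    (h : ConGen.Rel (traceRel I) w w') (a : α) : a ∈ w.toList ↔ a ∈ w'.toList := by
  rw [← List.count_pos_iff, ← List.count_pos_iff, rel_count h a]

lemma rel_length {I : α → α → Prop} {w w' : FreeMonoid α}
    (h : ConGen.Rel (traceRel I) w w') : w.toList.length = w'.toList.length := by
  induction h with
  | of x y hxy =>
      obtain ⟨c, d, hI, rfl, rfl⟩ := hxy
      simp [FreeMonoid.toList_mul]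
  | refl => rfl
  | symm _ ih => exact (ih).symm
  | trans _ _ ih1 ih2 => exact ih1.trans ih2
  | mul _ _ ih1 ih2 => simp [FreeMonoid.toList_mul, ih1, ih2]

lemma emb_comm {I : α → α → Prop} {a b : α} (h : I a b) :
    emb I a * emb I b = emb I b * emb I a := by
  rw [emb, emb, ← map_mul, ← map_mul, mk_eq]
  exact ConGen.Rel.of _ _ ⟨a, b, h, rfl, rfl⟩

/-- `b` occurs in `l` preceded only by letters independent of it. -/

def QpL (I : α → α → Prop) (b : α) (l : List α) : Prop :=
  ∃ l1 l2, l = l1 ++ b :: l2 ∧ ∀ x ∈ l1, I x b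

lemma qpl_nil {I : α → α → Prop} {b : α} : ¬ QpL I b [] := by
  rintro ⟨l1, l2, h, -⟩
  simpa using h.symm

lemma qpl_cons {I : α → α → Prop} {b x : α} {l : List α} :
    QpL I b (x :: l) ↔ x = b ∨ (I x b ∧ QpL I b l) := by
  constructor
  · rintro ⟨l1, l2, h, hind⟩
    cases l1 with
    | nil =>
        simp only [List.nil_append, List.cons.injEq] at h
        exact Or.inl h.1
    | cons y l1 =>
        simp only [List.cons_append, List.cons.injEq] at h
        obtain ⟨rfl, h2⟩ := h
        exact Or.inr ⟨hind x (by simp), ⟨l1, l2, h2, fun z hz => hind z (by simp [hz])⟩⟩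
  · rintro (rfl | ⟨hxb, l1, l2, rfl, hind⟩)
    · exact ⟨[], l, rfl, by simp⟩
    · exact ⟨x :: l1, l2, rfl, by
        intro z hz
        rcases List.mem_cons.1 hz with rfl | hz
        · exact hxb
        · exact hind z hz⟩

lemma qpl_append {I : α → α → Prop} {b : α} {l1 l2 : List α} :
    QpL I b (l1 ++ l2) ↔ QpL I b l1 ∨ ((∀ x ∈ l1, I x b) ∧ QpL I b l2) := by
  induction l1 with
  | nil => simp [qpl_nil]
  | cons x l ih =>
      simp only [List.cons_append, qpl_cons, ih, List.mem_cons]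
      constructor
      · rintro (rfl | ⟨h1, (h2 | ⟨h3, h4⟩)⟩)
        · exact Or.inl (Or.inl rfl)
        · exact Or.inl (Or.inr ⟨h1, h2⟩)
        · exact Or.inr ⟨by rintro z (rfl | hz); exacts [h1, h3 z hz], h4⟩
      · rintro ((rfl | ⟨h1, h2⟩) | ⟨h1, h2⟩)
        · exact Or.inl rfl
        · exact Or.inr ⟨h1, Or.inl h2⟩
        · exact Or.inr ⟨h1 x (Or.inl rfl), Or.inr ⟨fun z hz => h1 z (Or.inr hz), h2⟩⟩

lemma rel_qp {I : α → α → Prop} (hsymm : ∀ a b, I a b → I b a) {w w' : FreeMonoid α}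
    (h : ConGen.Rel (traceRel I) w w') (b : α) : QpL I b w.toList ↔ QpL I b w'.toList := by
  induction h with
  | of x y hxy =>
      obtain ⟨c, d, hI, rfl, rfl⟩ := hxy
      show QpL I b [c, d] ↔ QpL I b [d, c]
      have hp : ∀ c d : α, QpL I b [c, d] ↔ c = b ∨ (I c b ∧ d = b) := by
        intro c d; rw [qpl_cons, qpl_cons]; simp [qpl_nil]
      rw [hp, hp]
      constructor
      · rintro (rfl | ⟨h1, rfl⟩)
        · exact Or.inr ⟨hsymm _ _ hI, rfl⟩
        · exact Or.inl rfl
      · rintro (rfl | ⟨h1, rfl⟩)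
        · exact Or.inr ⟨hI, rfl⟩
        · exact Or.inl rfl
  | refl => exact Iff.rfl
  | symm _ ih => exact ih.symm
  | trans _ _ ih1 ih2 => exact ih1.trans ih2
  | @mul w1 w1' w2 w2' h1 h2 ih1 ih2 =>
      show QpL I b (w1.toList ++ w2.toList) ↔ QpL I b (w1'.toList ++ w2'.toList)
      rw [qpl_append, qpl_append, ih1, ih2]
      have hmem : ∀ x, x ∈ w1.toList ↔ x ∈ w1'.toList := rel_mem h1
      constructor
      · rintro (h | ⟨hall, h⟩)
        · exact Or.inl h
        · exact Or.inr ⟨fun z hz => hall z ((hmem z).2 hz), h⟩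
      · rintro (h | ⟨hall, h⟩)
        · exact Or.inl h
        · exact Or.inr ⟨fun z hz => hall z ((hmem z).1 hz), h⟩

lemma qpl_mk {I : α → α → Prop} (b : α) (l1 l2 : List α) (h : ∀ x ∈ l1, I x b) :
    mkTM I (FreeMonoid.ofList (l1 ++ b :: l2)) = emb I b * mkTM I (FreeMonoid.ofList (l1 ++ l2)) := by
  induction l1 with
  | nil => exact mk_cons b l2
  | cons x l ih =>
      have hxb : I x b := h x (by simp)
      rw [List.cons_append, mk_cons, ih (fun z hz => h z (by simp [hz])), List.cons_append,
        mk_cons, ← mul_assoc, ← mul_assoc]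
      congr 1
      exact emb_comm hxb

lemma letter_div {I : α → α → Prop} {b : α} {t : TM I} (w : FreeMonoid α)
    (hw : mkTM I w = t) (hq : QpL I b w.toList) : ∃ t', t = emb I b * t' := by
  obtain ⟨l1, l2, hl, hind⟩ := hq
  refine ⟨mkTM I (FreeMonoid.ofList (l1 ++ l2)), ?_⟩
  rw [← hw, ← qpl_mk b l1 l2 hind, ← hl]
  rfl

lemma rel_erase {I : α → α → Prop} (hirr : ∀ a, ¬ I a a) (a : α) {w w' : FreeMonoid α}
    (h : ConGen.Rel (traceRel I) w w') :
    mkTM I (FreeMonoid.ofList (w.toList.erase a)) = mkTM I (FreeMonoid.ofList (w'.toList.erase a)) := by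
  induction h with
  | of x y hxy =>
      obtain ⟨c, d, hI, rfl, rfl⟩ := hxy
      have hcd : c ≠ d := fun h => hirr c (h ▸ hI)
      show mkTM I (FreeMonoid.ofList ([c, d].erase a)) = mkTM I (FreeMonoid.ofList ([d, c].erase a))
      by_cases hc : c = a
      · subst hc
        rw [List.erase_cons_head, List.erase_cons_tail (by simp [Ne.symm hcd]),
          List.erase_cons_head]
      · by_cases hd : d = a
        · subst hd
          rw [List.erase_cons_head, List.erase_cons_tail (by simp [hc]), List.erase_cons_head]
        · rw [List.erase_cons_tail (by simp [hc]), List.erase_cons_tail (by simp [hd]),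
            List.erase_cons_tail (by simp [hd]), List.erase_cons_tail (by simp [hc])]
          rw [mk_eq]
          exact ConGen.Rel.of _ _ ⟨c, d, hI, rfl, rfl⟩
  | refl => rfl
  | symm _ ih => exact ih.symm
  | trans _ _ ih1 ih2 => exact ih1.trans ih2
  | @mul w1 w1' w2 w2' h1 h2 ih1 ih2 =>
      show mkTM I (FreeMonoid.ofList ((w1.toList ++ w2.toList).erase a)) =
        mkTM I (FreeMonoid.ofList ((w1'.toList ++ w2'.toList).erase a))
      by_cases hmem : a ∈ w1.toList
      · rw [List.erase_append_left _ hmem,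
          List.erase_append_left _ ((rel_mem h1 a).1 hmem), mk_append, mk_append, ih1]
        congr 1
        rw [FreeMonoid.ofList_toList, FreeMonoid.ofList_toList, mk_eq]
        exact h2
      · rw [List.erase_append_right _ hmem,
          List.erase_append_right _ (fun hm => hmem ((rel_mem h1 a).2 hm)),
          mk_append, mk_append, ih2]
        congr 1
        rw [FreeMonoid.ofList_toList, FreeMonoid.ofList_toList, mk_eq]
        exact h1

lemma cancel_letter {I : α → α → Prop} (hirr : ∀ a, ¬ I a a) (a : α) {u v : TM I}
    (h : emb I a * u = emb I a * v) : u = v := by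
  obtain ⟨wu, rfl⟩ := mk_surj u
  obtain ⟨wv, rfl⟩ := mk_surj v
  have h1 : mkTM I (FreeMonoid.ofList (a :: wu.toList)) =
      mkTM I (FreeMonoid.ofList (a :: wv.toList)) := by
    rw [mk_cons, mk_cons, FreeMonoid.ofList_toList, FreeMonoid.ofList_toList]
    exact h
  have h2 := rel_erase hirr a (mk_eq.1 h1)
  simpa [List.erase_cons_head, FreeMonoid.ofList_toList] using h2

lemma cancel_left {I : α → α → Prop} (hirr : ∀ a, ¬ I a a) (s : TM I) {u v : TM I}
    (h : s * u = s * v) : u = v := by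
  obtain ⟨w, rfl⟩ := mk_surj s
  rw [← FreeMonoid.ofList_toList w] at h
  generalize w.toList = l at h
  induction l generalizing u v with
  | nil =>
      have h1 : FreeMonoid.ofList ([] : List α) = 1 := rfl
      simpa [h1] using h
  | cons x l ih =>
      rw [mk_cons, mul_assoc, mul_assoc] at h
      exact ih (cancel_letter hirr x h)

lemma rel_filter {I : α → α → Prop} (hsymm : ∀ a b, I a b → I b a)
    (hirr : ∀ a, ¬ I a a) {a b : α} (hab : ¬ I a b) {w w' : FreeMonoid α} (h : ConGen.Rel (traceRel I) w w') :
    w.toList.filter (fun x => x = a ∨ x = b) = w'.toList.filter (fun x => x = a ∨ x = b) := by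
  induction h with
  | of x y hxy =>
      obtain ⟨c, d, hI, rfl, rfl⟩ := hxy
      show [c, d].filter _ = [d, c].filter _
      have hnot : ¬ ((c = a ∨ c = b) ∧ (d = a ∨ d = b)) := by
        rintro ⟨(rfl | rfl), (rfl | rfl)⟩
        · exact hirr _ hI
        · exact hab hI
        · exact hab (hsymm _ _ hI)
        · exact hirr _ hI
      by_cases hc : c = a ∨ c = b
      · by_cases hd : d = a ∨ d = b
        · exact absurd ⟨hc, hd⟩ hnot
        · simp [List.filter_cons, hc, hd]
      · by_cases hd : d = a ∨ d = b <;> simp [List.filter_cons, hc, hd]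
  | refl => rfl
  | symm _ ih => exact ih.symm
  | trans _ _ ih1 ih2 => exact ih1.trans ih2
  | @mul w1 w1' w2 w2' h1 h2 ih1 ih2 =>
      show (w1.toList ++ w2.toList).filter _ = (w1'.toList ++ w2'.toList).filter _
      rw [List.filter_append, List.filter_append, ih1, ih2]

/-- If `x·a` and `x·b` have a common extension with `a ≠ b`, then `I a b`. -/

lemma indep_of_common {I : α → α → Prop} (hsymm : ∀ a b, I a b → I b a)
    (hirr : ∀ a, ¬ I a a) {a b : α} (hne : a ≠ b) {x u v : TM I}
    (h : x * emb I a * u = x * emb I b * v) : I a b := by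
  by_contra hab
  rw [mul_assoc, mul_assoc] at h
  have h' := cancel_left hirr x h
  obtain ⟨wu, rfl⟩ := mk_surj u
  obtain ⟨wv, rfl⟩ := mk_surj v
  have h1 : mkTM I (FreeMonoid.ofList (a :: wu.toList)) =
      mkTM I (FreeMonoid.ofList (b :: wv.toList)) := by
    rw [mk_cons, mk_cons, FreeMonoid.ofList_toList, FreeMonoid.ofList_toList]
    exact h'
  have h2 := rel_filter hsymm hirr hab (mk_eq.1 h1)
  rw [show (FreeMonoid.ofList (a :: wu.toList)).toList = a :: wu.toList from rfl,
    show (FreeMonoid.ofList (b :: wv.toList)).toList = b :: wv.toList from rfl,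
    List.filter_cons, List.filter_cons] at h2
  simp only [show ((a = a ∨ a = b : Prop) : Prop) = True from by simp] at h2
  rw [if_pos (by simp), if_pos (by simp)] at h2
  exact hne (List.cons.injEq .. ▸ h2).1 |>.elim

/-- Extraction: if `b·u = a·v` with `a ≠ b` then `b` divides `v`. -/

lemma letter_extract {I : α → α → Prop} (hsymm : ∀ a b, I a b → I b a) {a b : α}
    (hne : a ≠ b) {u v : TM I} (h : emb I b * u = emb I a * v) :
    ∃ v', v = emb I b * v' := by
  obtain ⟨wu, rfl⟩ := mk_surj u
  obtain ⟨wv, rfl⟩ := mk_surj v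
  have h1 : mkTM I (FreeMonoid.ofList (b :: wu.toList)) =
      mkTM I (FreeMonoid.ofList (a :: wv.toList)) := by
    rw [mk_cons, mk_cons, FreeMonoid.ofList_toList, FreeMonoid.ofList_toList]
    exact h
  have hq : QpL I b (a :: wv.toList) := by
    have := (rel_qp hsymm (mk_eq.1 h1) b).1 (by
      show QpL I b (b :: wu.toList)
      exact qpl_cons.2 (Or.inl rfl))
    exact this
  rcases qpl_cons.1 hq with rfl | ⟨-, hq'⟩
  · exact absurd rfl hne
  · exact letter_div (FreeMonoid.ofList wv.toList) (by rw [FreeMonoid.ofList_toList]) hq'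

lemma ctr_eq {I : α → α → Prop} (c : Finset α) :
    ctr I c = (c.toList.map (emb I)).prod := by
  rw [ctr, MonoidHom.map_list_prod]
  rw [List.map_map]
  rfl

lemma ctr_empty {I : α → α → Prop} : ctr I (∅ : Finset α) = 1 := by
  simp [ctr_eq]

lemma ctr_insert {I : α → α → Prop} {a : α} {s : Finset α} (ha : a ∉ s)
    (hcl : IsCliq I (insert a s)) : ctr I (insert a s) = emb I a * ctr I s := by
  rw [ctr_eq, ctr_eq]
  have hperm : List.Perm ((insert a s).toList.map (emb I)) ((a :: s.toList).map (emb I)) :=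
    (Finset.toList_insert ha).map _
  have hpw : ((insert a s).toList.map (emb I)).Pairwise Commute := by
    rw [List.pairwise_map]
    refine List.Pairwise.imp_of_mem ?_ (Finset.nodup_toList (insert a s))
    intro u v hu hv hne
    have hI : I u v := hcl u (Finset.mem_toList.1 hu) v (Finset.mem_toList.1 hv) hne
    exact emb_comm hI
  rw [hperm.prod_eq' hpw]
  simp [List.map_cons]

lemma emb_div_ctr {I : α → α → Prop} {a : α} {c : Finset α} (ha : a ∈ c)
    (hcl : IsCliq I c) : ∃ u, ctr I c = emb I a * u := by
  refine ⟨ctr I (c.erase a), ?_⟩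
  rw [← ctr_insert (Finset.notMem_erase a c) (by rw [Finset.insert_erase ha]; exact hcl),
    Finset.insert_erase ha]

/-- Key lattice lemma: if every letter of a clique divides `m`, so does the clique trace. -/

lemma cliq_div {I : α → α → Prop} (hsymm : ∀ a b, I a b → I b a) {c : Finset α}
    (hcl : IsCliq I c) {m : TM I} (h : ∀ a ∈ c, ∃ u, m = emb I a * u) :
    ∃ u, m = ctr I c * u := by
  induction c using Finset.induction_on generalizing m with
  | empty => exact ⟨m, by rw [ctr_empty, one_mul]⟩
  | @insert a s ha ih =>
      obtain ⟨v, rfl⟩ := h a (Finset.mem_insert_self a s)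
      have hs : ∀ b ∈ s, ∃ u, v = emb I b * u := by
        intro b hb
        obtain ⟨u, hu⟩ := h b (Finset.mem_insert_of_mem hb)
        have hne : a ≠ b := fun hh => ha (hh ▸ hb)
        exact letter_extract hsymm hne hu.symm
      have hcls : IsCliq I s := fun u hu v hv =>
        hcl u (Finset.mem_insert_of_mem hu) v (Finset.mem_insert_of_mem hv)
      obtain ⟨w, rfl⟩ := ih hcls hs
      exact ⟨w, by rw [ctr_insert ha hcl, mul_assoc]⟩

lemma leT_mk {I : α → α → Prop} (u : TM I) (s : HSeq I) :
    leT I u (Quotient.mk (hseqSetoid I) s) ↔ ∃ m, pref I u (s.1 m) := Iff.rfl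

lemma hseq_mono {I : α → α → Prop} (s : HSeq I) {m n : ℕ} (h : m ≤ n) :
    pref I (s.1 m) (s.1 n) := by
  induction n, h using Nat.le_induction with
  | base => exact ⟨1, (mul_one _).symm⟩
  | succ n hmn ih => exact pref_trans I ih (s.2 n)

lemma leT_of_pref {I : α → α → Prop} {u v : TM I} {ξ : GT I} (h : pref I u v)
    (hv : leT I v ξ) : leT I u ξ := by
  obtain ⟨s, rfl⟩ := Quotient.exists_rep ξ
  obtain ⟨m, hm⟩ := (leT_mk v s).1 hv
  exact (leT_mk u s).2 ⟨m, pref_trans I h hm⟩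

lemma leT_common {I : α → α → Prop} {u v : TM I} {ξ : GT I} (hu : leT I u ξ)
    (hv : leT I v ξ) : ∃ z, pref I u z ∧ pref I v z ∧ leT I z ξ := by
  obtain ⟨s, rfl⟩ := Quotient.exists_rep ξ
  obtain ⟨m, hm⟩ := (leT_mk u s).1 hu
  obtain ⟨k, hk⟩ := (leT_mk v s).1 hv
  refine ⟨s.1 (max m k), pref_trans I hm (hseq_mono s (le_max_left m k)),
    pref_trans I hk (hseq_mono s (le_max_right m k)), (leT_mk _ s).2 ⟨max m k, 1, (mul_one _).symm⟩⟩

/-- At a boundary point, every finite prefix extends by a letter. -/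

lemma exists_next {I : α → α → Prop} (ξ : Bdry I) {x : TM I} (hx : leT I x ξ.1) :
    ∃ a, leT I (x * emb I a) ξ.1 := by
  obtain ⟨ξv, hξ⟩ := ξ
  obtain ⟨s, rfl⟩ := Quotient.exists_rep ξv
  by_contra hno
  push_neg at hno
  have hkey : ∀ n, pref I (s.1 n) x := by
    intro n
    obtain ⟨m, hm⟩ := (leT_mk x s).1 hx
    set N := max m n with hN
    have hxN : pref I x (s.1 N) := pref_trans I hm (hseq_mono s (le_max_left m n))
    obtain ⟨w, hw⟩ := hxN
    by_cases hw1 : w = 1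
    · rw [hw1, mul_one] at hw
      exact hw ▸ hseq_mono s (le_max_right m n)
    · obtain ⟨lw, rfl⟩ := mk_surj w
      have hlw : lw.toList ≠ [] := by
        intro hnil
        apply hw1
        rw [← FreeMonoid.ofList_toList lw, hnil]
        rfl
      obtain ⟨a, l, hl⟩ := List.exists_cons_of_ne_nil hlw
      exfalso
      apply hno a
      refine (leT_mk _ s).2 ⟨N, mkTM I (FreeMonoid.ofList l), ?_⟩
      rw [hw, ← FreeMonoid.ofList_toList lw, hl, mk_cons, mul_assoc]
      rfl
  exact hξ x (Quotient.sound ⟨fun n => ⟨0, hkey n⟩, fun _ => (leT_mk x s).1 hx⟩)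

/-- Martin kernels at boundary points are Möbius harmonic: for `ξ ∈ BM`,
`K_ξ(x) = (1/f(x))·1_{x ≤ ξ}` satisfies the Möbius harmonicity equation. -/
theorem martin_kernel_harmonic {α : Type*} [Fintype α] (I : α → α → Prop)
    (hsymm : ∀ a b, I a b → I b a) (hirr : ∀ a, ¬ I a a)
    (hconn : ∀ a b : α, Relation.ReflTransGen (fun x y : α => ¬ I x y) a b)
    (P : Measure (Bdry I)) [IsProbabilityMeasure P]
    (hpos : ∀ u : TM I, 0 < P (cylSet I u))
    (hmult : ∀ u v : TM I, P (cylSet I (u * v)) = P (cylSet I u) * P (cylSet I v))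
    (ξ : Bdry I) (K : TM I → ℝ)
    (hK : ∀ x : TM I,
      K x = (1 / (P (cylSet I x)).toReal) * (if leT I x ξ.1 then 1 else 0)) :
    ∀ x : TM I,
      (∑ c : Finset α,
        if IsCliq I c then
          (-1 : ℝ) ^ c.card * (P (cylSet I (ctr I c))).toReal * K (x * ctr I c)
        else 0) = 0 := by
  intro x
  by_cases hx : leT I x ξ.1
  swap
  · apply Finset.sum_eq_zero
    intro c _
    by_cases hc : IsCliq I c
    · rw [if_pos hc, hK, if_neg (fun h => hx (leT_of_pref ⟨ctr I c, rfl⟩ h))]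
      ring
    · rw [if_neg hc]
  · set S : Finset α := Finset.univ.filter (fun a => leT I (x * emb I a) ξ.1) with hS
    have hmemS : ∀ a, a ∈ S ↔ leT I (x * emb I a) ξ.1 := by
      intro a; simp [hS]
    have hScliq : ∀ a ∈ S, ∀ b ∈ S, a ≠ b → I a b := by
      intro a ha b hb hne
      rw [hmemS] at ha hb
      obtain ⟨z, ⟨u, hu⟩, ⟨v, hv⟩, -⟩ := leT_common ha hb
      exact indep_of_common hsymm hirr hne (hu ▸ hv)
    have hSne : S.Nonempty := by
      obtain ⟨a, ha⟩ := exists_next ξ hx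
      exact ⟨a, (hmemS a).2 ha⟩
    have hiff : ∀ c : Finset α, (IsCliq I c ∧ leT I (x * ctr I c) ξ.1) ↔ c ⊆ S := by
      intro c
      constructor
      · rintro ⟨hcl, hle⟩ a ha
        obtain ⟨u, hu⟩ := emb_div_ctr ha hcl
        refine (hmemS a).2 (leT_of_pref ⟨u, ?_⟩ hle)
        rw [hu, mul_assoc]
      · intro hsub
        have hcl : IsCliq I c := fun a ha b hb hne =>
          hScliq a (hsub ha) b (hsub hb) hne
        refine ⟨hcl, ?_⟩
        rcases Finset.eq_empty_or_nonempty c with rfl | ⟨a₀, ha₀⟩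
        · rw [ctr_empty, mul_one]; exact hx
        · obtain ⟨s, hs⟩ := Quotient.exists_rep ξ.1
          have hle : ∀ a, ∃ m, a ∈ c → pref I (x * emb I a) (s.1 m) := by
            intro a
            by_cases ha : a ∈ c
            · have := (hmemS a).1 (hsub ha)
              rw [← hs] at this
              obtain ⟨m, hm⟩ := (leT_mk _ s).1 this
              exact ⟨m, fun _ => hm⟩
            · exact ⟨0, fun h => absurd h ha⟩
          choose f hf using hle
          set N := c.sup f with hN
          have hbd : ∀ a ∈ c, ∃ u, s.1 N = x * emb I a * u := fun a ha =>
            pref_trans I (hf a ha) (hseq_mono s (Finset.le_sup ha))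
          obtain ⟨u₀, hu₀⟩ := hbd a₀ ha₀
          have hm : ∀ a ∈ c, ∃ u, emb I a₀ * u₀ = emb I a * u := by
            intro a ha
            obtain ⟨u, hu⟩ := hbd a ha
            exact ⟨u, cancel_left hirr x (by
              rw [← mul_assoc, ← hu₀, hu, mul_assoc])⟩
          obtain ⟨u, hu⟩ := cliq_div hsymm hcl hm
          rw [← hs]
          refine (leT_mk _ s).2 ⟨N, u, ?_⟩
          rw [hu₀, mul_assoc, hu, ← mul_assoc]
    have hsum : ∀ c : Finset α,
        (if IsCliq I c then
          (-1 : ℝ) ^ c.card * (P (cylSet I (ctr I c))).toReal * K (x * ctr I c)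
        else 0) =
        (if c ∈ S.powerset then (-1 : ℝ) ^ c.card * (P (cylSet I x)).toReal⁻¹ else 0) := by
      intro c
      have hfx : (P (cylSet I x)).toReal ≠ 0 :=
        (ENNReal.toReal_pos (hpos x).ne' (measure_ne_top P _)).ne'
      have hfc : (P (cylSet I (ctr I c))).toReal ≠ 0 :=
        (ENNReal.toReal_pos (hpos _).ne' (measure_ne_top P _)).ne'
      have hmul : (P (cylSet I (x * ctr I c))).toReal =
          (P (cylSet I x)).toReal * (P (cylSet I (ctr I c))).toReal := by
        rw [hmult, ENNReal.toReal_mul]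
      by_cases hcs : c ∈ S.powerset
      · have hsub := Finset.mem_powerset.1 hcs
        obtain ⟨hcl, hle⟩ := (hiff c).2 hsub
        rw [if_pos hcs, if_pos hcl, hK, if_pos hle, hmul]
        field_simp
      · rw [if_neg hcs]
        by_cases hcl : IsCliq I c
        · have hnle : ¬ leT I (x * ctr I c) ξ.1 := fun hle =>
            hcs (Finset.mem_powerset.2 ((hiff c).1 ⟨hcl, hle⟩))
          rw [if_pos hcl, hK, if_neg hnle]
          ring
        · rw [if_neg hcl]
    rw [Finset.sum_congr rfl (fun c _ => hsum c), Finset.sum_ite_mem, Finset.univ_inter,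
      ← Finset.sum_mul]
    have hzero : (∑ c ∈ S.powerset, (-1 : ℝ) ^ c.card) = 0 := by
      exact_mod_cast Finset.sum_powerset_neg_one_pow_card_of_nonempty hSne
    rw [hzero, zero_mul]
end
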